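/- arXiv:2207.05308 — 2 statements merged into one kernel-verified Lean document; each statement's English description precedes it below -/
import Mathlib

section
/- Let T: v₁ → ⋯ → vₙ → v₁ be a cyclic tour on distinct reals. Then the number of conflicting pairs in T is at least half the number of turning points in T, i.e., |cf(T)| ≥ |tp(T)|/2. Here a pair (vᵢ, vⱼ) is conflicting if vᵢ ≤ v_{j+1} < v_{i+1} ≤ vⱼ (indices cyclic). -/
/-!
View the tour as a permutation `σ` of a finite linear order and induct on the number of points
it moves. If some point `x` is passed through monotonically, bypassing it (`σ⁻¹ x ↦ σ x`) keeps
every peak, and a conflict of the new step is already a conflict of one of the two steps it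
replaces, so there are no new conflicts. Otherwise every moved point is a peak or a valley;
bypassing the lowest peak `x` loses that peak and at least one conflict, namely `(σ⁻¹ x, x)` if
`σ⁻¹ x ≤ σ x` and `(σ⁻¹ x, σ⁻² x)` otherwise. Hence `#peaks ≤ #conflicts`. The valleys are the
peaks of `σ` for the reversed order, which has the same conflicts with the two coordinates
swapped, so `#turning points ≤ #peaks + #valleys ≤ 2 · #conflicts`.
-/

/-- `i` is a turning point of the cyclic tour `v` (a strict local extremum). -/
def turning (v : ℤ → ℝ) (i : ℤ) : Prop :=
  ¬(v (i - 1) < v i ∧ v i < v (i + 1)) ∧ ¬(v (i + 1) < v i ∧ v i < v (i - 1))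

/-- The pair `(i, j)` is conflicting in the cyclic tour `v`:
`vᵢ ≤ v_{j+1} < v_{i+1} ≤ vⱼ`. -/
def conflicting (v : ℤ → ℝ) (i j : ℤ) : Prop :=
  v i ≤ v (j + 1) ∧ v (j + 1) < v (i + 1) ∧ v (i + 1) ≤ v j

open Function Set

namespace Equiv.Perm

variable {α : Type*}

def dual (σ : Perm α) : Perm αᵒᵈ := OrderDual.toDual.permCongr σ

@[simp] lemma dual_apply (σ : Perm α) (y : αᵒᵈ) :
    σ.dual y = OrderDual.toDual (σ (OrderDual.ofDual y)) := rfl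

variable [LinearOrder α] (σ : Perm α)

def peaks : Set α := {y | σ⁻¹ y < y ∧ σ y < y}

def valleys : Set α := {y | y < σ⁻¹ y ∧ y < σ y}

/-- Fixed points count as turning points. -/
def IsTurning (y : α) : Prop := ¬(σ⁻¹ y < y ∧ y < σ y) ∧ ¬(σ y < y ∧ y < σ⁻¹ y)

/-- `(x, y)` conflicts when the ascending step `x → σ x` and the descending step `y → σ y`
overlap as `x ≤ σ y < σ x ≤ y`. -/
def conflicts : Set (α × α) := {c | c.1 ≤ σ c.2 ∧ σ c.2 < σ c.1 ∧ σ c.1 ≤ c.2}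

/-- The tour that skips `x`: it sends `σ⁻¹ x` to `σ x` and fixes `x`. -/
def bypass (x : α) : Perm α := swap x (σ x) * σ

variable {σ} {x y : α}

lemma isTurning_of_apply_eq (h : σ y = y) : σ.IsTurning y := by
  have h' : σ⁻¹ y = y := by rw [inv_eq_iff_eq, h]
  simp [IsTurning, h, h']

lemma isTurning_of_mem_peaks (h : y ∈ σ.peaks) : σ.IsTurning y :=
  ⟨fun h' => lt_asymm h.2 h'.2, fun h' => lt_asymm h.1 h'.2⟩

lemma isTurning_of_mem_valleys (h : y ∈ σ.valleys) : σ.IsTurning y :=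
  ⟨fun h' => lt_asymm h.1 h'.1, fun h' => lt_asymm h.2 h'.1⟩

lemma mem_peaks_of_apply_lt (ht : σ.IsTurning y) (hy : σ y < y) : y ∈ σ.peaks :=
  ⟨lt_of_le_of_ne (not_lt.1 fun h => ht.2 ⟨hy, h⟩) fun h => hy.ne (inv_eq_iff_eq.1 h).symm, hy⟩

lemma lt_inv_apply_of_lt_apply (ht : σ.IsTurning y) (hy : y < σ y) : y < σ⁻¹ y :=
  lt_of_le_of_ne (not_lt.1 fun h => ht.1 ⟨h, hy⟩) fun h => hy.ne (inv_eq_iff_eq.1 h.symm)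

lemma mem_peaks_or_mem_valleys (hy : σ y ≠ y) (ht : σ.IsTurning y) :
    y ∈ σ.peaks ∨ y ∈ σ.valleys := by
  rcases hy.lt_or_gt with h | h
  · exact .inl (mem_peaks_of_apply_lt ht h)
  · exact .inr ⟨lt_inv_apply_of_lt_apply ht h, h⟩

lemma lt_apply_of_mem_conflicts {c : α × α} (hc : c ∈ σ.conflicts) :
    c.1 < σ c.1 ∧ σ c.2 < c.2 :=
  ⟨hc.1.trans_lt hc.2.1, hc.2.1.trans_le hc.2.2⟩

lemma ncard_peaks_dual : σ.dual.peaks.ncard = σ.valleys.ncard := rfl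

lemma ncard_conflicts_dual : σ.dual.conflicts.ncard = σ.conflicts.ncard := by
  refine ncard_congr (fun c _ => (OrderDual.ofDual c.2, OrderDual.ofDual c.1)) ?_ ?_ ?_
  · rintro ⟨a, b⟩ ⟨h₁, h₂, h₃⟩
    exact ⟨h₃, h₂, h₁⟩
  · rintro ⟨a, b⟩ ⟨a', b'⟩ - - h
    simpa [and_comm] using h
  · rintro ⟨a, b⟩ ⟨h₁, h₂, h₃⟩
    exact ⟨(OrderDual.toDual b, OrderDual.toDual a), ⟨h₃, h₂, h₁⟩, rfl⟩

@[simp] lemma bypass_apply_self : σ.bypass x x = x := by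
  simp [bypass]

@[simp] lemma bypass_apply_inv_self : σ.bypass x (σ⁻¹ x) = σ x := by
  simp [bypass]

lemma bypass_apply_of_ne (h₁ : y ≠ x) (h₂ : y ≠ σ⁻¹ x) : σ.bypass x y = σ y := by
  refine swap_apply_of_ne_of_ne ?_ (σ.injective.ne h₁)
  rwa [Ne, ← eq_inv_iff_eq]

@[simp] lemma bypass_inv_apply_apply_self : (σ.bypass x)⁻¹ (σ x) = σ⁻¹ x := by
  rw [inv_eq_iff_eq, bypass_apply_inv_self]

lemma bypass_inv_apply_of_ne (h₁ : y ≠ x) (h₂ : y ≠ σ x) : (σ.bypass x)⁻¹ y = σ⁻¹ y := by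
  rw [inv_eq_iff_eq, bypass_apply_of_ne (by rwa [Ne, inv_eq_iff_eq]) (σ⁻¹.injective.ne h₁)]
  simp

lemma dual_bypass : (σ.bypass x).dual = σ.dual.bypass (OrderDual.toDual x) := by
  ext y
  simp only [bypass, dual_apply, coe_mul, comp_apply, swap_apply_def,
    EmbeddingLike.apply_eq_iff_eq, OrderDual.ofDual_toDual]
  split_ifs <;> rfl

lemma card_support_bypass_lt [Fintype α] (hx : σ x ≠ x) :
    (σ.bypass x).support.card < σ.support.card :=
  card_support_swap_mul hx

lemma ne_of_mem_conflicts_bypass {c : α × α} (hc : c ∈ (σ.bypass x).conflicts) :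
    c.1 ≠ x ∧ c.2 ≠ x := by
  have := lt_apply_of_mem_conflicts hc
  constructor <;> rintro h <;> simp [h] at this

lemma peaks_sdiff_subset_peaks_bypass (hx : x ∉ σ.valleys) :
    σ.peaks \ {x} ⊆ (σ.bypass x).peaks := by
  rintro y ⟨⟨hpy, hsy⟩, hyx : y ≠ x⟩
  constructor
  · by_cases hys : y = σ x
    · subst hys
      rw [bypass_inv_apply_apply_self]
      simp only [coe_inv, symm_apply_apply] at hpy
      exact lt_of_le_of_lt (not_lt.1 fun h => hx ⟨h, hpy⟩) hpy
    · rwa [bypass_inv_apply_of_ne hyx hys]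
  · by_cases hyp : y = σ⁻¹ x
    · subst hyp
      rw [bypass_apply_inv_self]
      simp only [coe_inv, apply_symm_apply] at hsy
      exact lt_of_le_of_lt (not_lt.1 fun h => hx ⟨hsy, h⟩) hsy
    · rwa [bypass_apply_of_ne hyx hyp]

lemma ncard_conflicts_bypass_le_of_lt_of_lt [Finite α] (h₁ : σ⁻¹ x < x) (h₂ : x < σ x) :
    (σ.bypass x).conflicts.ncard ≤ σ.conflicts.ncard := by
  set p := σ⁻¹ x
  have hp : σ p = x := by simp [p]
  -- a conflict `(p, b)` of the new step `p → σ x` is one of `x → σ x` or of `p → x`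
  refine ncard_le_ncard_of_injOn (fun c => if c.1 = p ∧ x ≤ σ c.2 then (x, c.2) else c) ?_ ?_
  · rintro ⟨a, b⟩ hc
    obtain ⟨hax, hbx⟩ := ne_of_mem_conflicts_bypass hc
    obtain ⟨hab, hba, hb⟩ := hc
    dsimp only at *
    have hbp : b ≠ p := by
      rintro rfl
      rw [bypass_apply_inv_self] at hab hba
      exact absurd (hba.trans_le hb) (h₁.trans h₂).not_gt
    rw [bypass_apply_of_ne hbx hbp] at hab hba
    by_cases hap : a = p
    · subst hap
      rw [bypass_apply_inv_self] at hba hb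
      split_ifs with h
      · exact ⟨h.2, hba, hb⟩
      · exact ⟨hab, hp ▸ lt_of_not_ge fun h' => h ⟨rfl, h'⟩, hp ▸ h₂.le.trans hb⟩
    · rw [bypass_apply_of_ne hax hap] at hba hb
      rw [if_neg fun h => hap h.1]
      exact ⟨hab, hba, hb⟩
  · rintro ⟨a, b⟩ hc ⟨a', b'⟩ hc' h
    have := (ne_of_mem_conflicts_bypass hc).1
    have := (ne_of_mem_conflicts_bypass hc').1
    dsimp only at *
    split_ifs at h <;> simp_all [Prod.ext_iff]

lemma ncard_conflicts_bypass_le [Finite α] (hx : ¬σ.IsTurning x) :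
    (σ.bypass x).conflicts.ncard ≤ σ.conflicts.ncard := by
  rcases not_and_or.1 hx with h | h <;> rw [not_not] at h
  · exact ncard_conflicts_bypass_le_of_lt_of_lt h.1 h.2
  · have := ncard_conflicts_bypass_le_of_lt_of_lt (σ := σ.dual) (x := OrderDual.toDual x) h.2 h.1
    rwa [← dual_bypass, ncard_conflicts_dual, ncard_conflicts_dual] at this

lemma ncard_conflicts_bypass_lt_of_inv_apply_le [Finite α] (hx : x ∈ σ.peaks)
    (hPS : σ⁻¹ x ≤ σ x) (hdesc : ∀ b, σ b < b → x ≤ b) :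
    (σ.bypass x).conflicts.ncard < σ.conflicts.ncard := by
  set P := σ⁻¹ x
  have hP : σ P = x := by simp [P]
  have hsub : (σ.bypass x).conflicts ⊆ σ.conflicts \ {(P, x)} := by
    rintro ⟨a, b⟩ hc
    obtain ⟨hax, hbx⟩ := ne_of_mem_conflicts_bypass hc
    obtain ⟨hab, hba, hb⟩ := hc
    dsimp only at *
    have hbP : b ≠ P := by
      rintro rfl
      rw [bypass_apply_inv_self] at hba
      exact absurd (hba.trans_le hb) hPS.not_gt
    rw [bypass_apply_of_ne hbx hbP] at hab hba
    refine ⟨?_, fun h => hbx (Prod.ext_iff.1 h).2⟩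
    by_cases haP : a = P
    · subst haP
      rw [bypass_apply_inv_self] at hba hb
      exact ⟨hab, hP ▸ hba.trans hx.2, hP ▸ hdesc b (hba.trans_le hb)⟩
    · rw [bypass_apply_of_ne hax haP] at hba hb
      exact ⟨hab, hba, hb⟩
  have hPx : (P, x) ∈ σ.conflicts := ⟨hPS, hP ▸ hx.2, hP.le⟩
  exact (ncard_le_ncard hsub).trans_lt (ncard_sdiff_singleton_lt_of_mem hPx)

lemma ncard_conflicts_bypass_lt_of_apply_lt [Finite α] (hx : x ∈ σ.peaks)
    (hSP : σ x < σ⁻¹ x) (hQ : x ≤ σ⁻¹ (σ⁻¹ x)) :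
    (σ.bypass x).conflicts.ncard < σ.conflicts.ncard := by
  set P := σ⁻¹ x
  have hP : σ P = x := by simp [P]
  have hPQ : (P, σ⁻¹ P) ∈ σ.conflicts := by
    refine ⟨by simp, ?_, hP ▸ hQ⟩
    rw [hP, show σ (σ⁻¹ P) = P by simp]
    exact hx.1
  -- the new step `P → σ x` descends; its conflicts `(a, P)` become conflicts `(a, x)`
  refine (ncard_le_ncard_of_injOn (s := (σ.bypass x).conflicts)
    (fun c => if c.2 = P then (c.1, x) else c) ?_ ?_).trans_lt (ncard_sdiff_singleton_lt_of_mem hPQ)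
  · rintro ⟨a, b⟩ hc
    obtain ⟨hax, hbx⟩ := ne_of_mem_conflicts_bypass hc
    obtain ⟨hab, hba, hb⟩ := hc
    dsimp only at *
    have haP : a ≠ P := by
      rintro rfl
      rw [bypass_apply_inv_self] at hba
      exact absurd (hab.trans_lt hba) hSP.not_gt
    rw [bypass_apply_of_ne hax haP] at hba hb
    split_ifs with hbP
    · subst hbP
      rw [bypass_apply_inv_self] at hab hba
      exact ⟨⟨hab, hba, hb.trans hx.1.le⟩, fun h => haP (Prod.ext_iff.1 h).1⟩
    · rw [bypass_apply_of_ne hbx hbP] at hab hba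
      exact ⟨⟨hab, hba, hb⟩, fun h => haP (Prod.ext_iff.1 h).1⟩
  · rintro ⟨a, b⟩ hc ⟨a', b'⟩ hc' h
    have := (ne_of_mem_conflicts_bypass hc).2
    have := (ne_of_mem_conflicts_bypass hc').2
    dsimp only at *
    split_ifs at h <;> simp_all [Prod.ext_iff]

lemma ncard_conflicts_bypass_lt [Finite α] (hturn : ∀ y, σ.IsTurning y) (hx : x ∈ σ.peaks)
    (hmin : ∀ y ∈ σ.peaks, x ≤ y) :
    (σ.bypass x).conflicts.ncard < σ.conflicts.ncard := by
  -- with no monotone passages every descending step starts at a peak, hence above `x`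
  have hdesc : ∀ b, σ b < b → x ≤ b := fun b hb => hmin b (mem_peaks_of_apply_lt (hturn b) hb)
  rcases le_or_gt (σ⁻¹ x) (σ x) with h | h
  · exact ncard_conflicts_bypass_lt_of_inv_apply_le hx h hdesc
  · refine ncard_conflicts_bypass_lt_of_apply_lt hx h (hdesc _ ?_)
    simpa using lt_inv_apply_of_lt_apply (hturn (σ⁻¹ x)) (by simpa using hx.1)

variable (σ) in
theorem ncard_peaks_le_ncard_conflicts [Finite α] : σ.peaks.ncard ≤ σ.conflicts.ncard := by
  cases nonempty_fintype α
  induction hN : σ.support.card using Nat.strong_induction_on generalizing σ with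
  | _ N ih =>
  subst hN
  by_cases hturn : ∀ y, σ.IsTurning y
  · rcases σ.peaks.eq_empty_or_nonempty with h | h
    · simp [h]
    obtain ⟨x, hx, hmin⟩ := exists_min_image σ.peaks id (toFinite _) h
    have hsub := peaks_sdiff_subset_peaks_bypass fun h => lt_asymm hx.2 h.2
    calc σ.peaks.ncard ≤ (σ.peaks \ {x}).ncard + 1 := by
          simpa using ncard_le_ncard_sdiff_add_ncard σ.peaks {x}
      _ ≤ (σ.bypass x).conflicts.ncard + 1 := by
          gcongr
          exact (ncard_le_ncard hsub).trans (ih _ (card_support_bypass_lt hx.2.ne) _ rfl)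
      _ ≤ σ.conflicts.ncard := ncard_conflicts_bypass_lt hturn hx hmin
  · obtain ⟨x, hx⟩ := not_forall.1 hturn
    have hsub := peaks_sdiff_subset_peaks_bypass fun h => hx (isTurning_of_mem_valleys h)
    rw [sdiff_singleton_eq_self fun h => hx (isTurning_of_mem_peaks h)] at hsub
    calc σ.peaks.ncard ≤ (σ.bypass x).peaks.ncard := ncard_le_ncard hsub
      _ ≤ (σ.bypass x).conflicts.ncard :=
          ih _ (card_support_bypass_lt fun h => hx (isTurning_of_apply_eq h)) _ rfl
      _ ≤ σ.conflicts.ncard := ncard_conflicts_bypass_le hx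

variable (σ) in
theorem ncard_isTurning_le [Finite α] :
    {y | σ y ≠ y ∧ σ.IsTurning y}.ncard ≤ 2 * σ.conflicts.ncard := by
  have hvalleys : σ.valleys.ncard ≤ σ.conflicts.ncard := by
    rw [← ncard_peaks_dual, ← ncard_conflicts_dual]
    exact ncard_peaks_le_ncard_conflicts σ.dual
  calc {y | σ y ≠ y ∧ σ.IsTurning y}.ncard ≤ (σ.peaks ∪ σ.valleys).ncard :=
        ncard_le_ncard fun y hy => mem_peaks_or_mem_valleys hy.1 hy.2
    _ ≤ σ.peaks.ncard + σ.valleys.ncard := ncard_union_le _ _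
    _ ≤ 2 * σ.conflicts.ncard := by linarith [ncard_peaks_le_ncard_conflicts σ]

theorem ncard_turning_le_of_injective {ι β : Type*} [Finite ι] [LinearOrder β]
    (σ : Perm ι) {f : ι → β} (hf : Injective f) :
    {i | σ i ≠ i ∧ ¬(f (σ⁻¹ i) < f i ∧ f i < f (σ i)) ∧ ¬(f (σ i) < f i ∧ f i < f (σ⁻¹ i))}.ncard ≤
      2 * {c : ι × ι | f c.1 ≤ f (σ c.2) ∧ f (σ c.2) < f (σ c.1) ∧ f (σ c.1) ≤ f c.2}.ncard :=
  let _ : LinearOrder ι := LinearOrder.lift' f hf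
  σ.ncard_isTurning_le

end Equiv.Perm

open Equiv

def icoRotate (n : ℤ) : Perm (Ico (0 : ℤ) n) where
  toFun i := ⟨if (i : ℤ) + 1 = n then 0 else i + 1, by
    have := mem_Ico.1 i.2
    split_ifs <;> constructor <;> omega⟩
  invFun i := ⟨if (i : ℤ) = 0 then n - 1 else i - 1, by
    have := mem_Ico.1 i.2
    split_ifs <;> constructor <;> omega⟩
  left_inv i := by
    obtain ⟨i, h0, h1⟩ := i
    ext
    dsimp only
    split_ifs <;> omega
  right_inv i := by
    obtain ⟨i, h0, h1⟩ := i
    ext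
    dsimp only
    split_ifs <;> omega

lemma icoRotate_apply_ne {n : ℤ} (hn : 2 ≤ n) (i : Ico (0 : ℤ) n) : icoRotate n i ≠ i := by
  have := mem_Ico.1 i.2
  rw [Ne, Subtype.ext_iff]
  simp only [icoRotate, coe_fn_mk]
  split_ifs <;> omega

lemma Function.Periodic.apply_icoRotate {β : Type*} {n : ℤ} {v : ℤ → β} (hv : Periodic v n)
    (i : Ico (0 : ℤ) n) : v (icoRotate n i) = v (i + 1) := by
  simp only [icoRotate, coe_fn_mk]
  split_ifs with h
  · rw [h, ← zero_add n, hv]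
  · rfl

lemma Function.Periodic.apply_icoRotate_inv {β : Type*} {n : ℤ} {v : ℤ → β} (hv : Periodic v n)
    (i : Ico (0 : ℤ) n) : v ((icoRotate n)⁻¹ i) = v (i - 1) := by
  simp only [icoRotate, Perm.coe_inv, coe_fn_symm_mk]
  split_ifs with h
  · rw [h, zero_sub, ← hv (-1), neg_add_eq_sub]
  · rfl

lemma natCard_subtype_ico (n : ℤ) (p : ℤ → Prop) :
    Nat.card {i : ℤ // 0 ≤ i ∧ i < n ∧ p i} = {i : Ico (0 : ℤ) n | p i}.ncard :=
  Nat.card_congr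
    { toFun := fun ⟨i, h0, h1, h⟩ => ⟨⟨i, h0, h1⟩, h⟩
      invFun := fun ⟨⟨i, h0, h1⟩, h⟩ => ⟨i, h0, h1, h⟩
      left_inv := fun ⟨_, _, _, _⟩ => rfl
      right_inv := fun ⟨⟨_, _, _⟩, _⟩ => rfl }

lemma natCard_subtype_ico_prod (n : ℤ) (r : ℤ → ℤ → Prop) :
    Nat.card {c : ℤ × ℤ // 0 ≤ c.1 ∧ c.1 < n ∧ 0 ≤ c.2 ∧ c.2 < n ∧ r c.1 c.2} =
      {c : Ico (0 : ℤ) n × Ico (0 : ℤ) n | r c.1 c.2}.ncard :=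
  Nat.card_congr
    { toFun := fun ⟨(i, j), hi0, hi1, hj0, hj1, h⟩ => ⟨(⟨i, hi0, hi1⟩, ⟨j, hj0, hj1⟩), h⟩
      invFun := fun ⟨(⟨i, hi0, hi1⟩, ⟨j, hj0, hj1⟩), h⟩ => ⟨(i, j), hi0, hi1, hj0, hj1, h⟩
      left_inv := fun ⟨(_, _), _, _, _, _, _⟩ => rfl
      right_inv := fun ⟨(⟨_, _, _⟩, ⟨_, _, _⟩), _⟩ => rfl }

/-- In any cyclic tour on `n ≥ 2` distinct reals, the number of conflicting
pairs is at least half the number of turning points: `|tp(T)| ≤ 2 · |cf(T)|`. -/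
theorem stmt_7 (n : ℤ) (hn : 2 ≤ n) (v : ℤ → ℝ)
    (hper : ∀ i, v (i + n) = v i)
    (hinj : ∀ i j, 0 ≤ i → i < n → 0 ≤ j → j < n → v i = v j → i = j) :
    Nat.card {i : ℤ // 0 ≤ i ∧ i < n ∧ turning v i} ≤
      2 * Nat.card {p : ℤ × ℤ // 0 ≤ p.1 ∧ p.1 < n ∧ 0 ≤ p.2 ∧ p.2 < n ∧
            conflicting v p.1 p.2} := by
  have hf : Injective fun i : Ico (0 : ℤ) n => v i :=
    fun i j h => Subtype.ext (hinj _ _ i.2.1 i.2.2 j.2.1 j.2.2 h)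
  have hv : Periodic v n := hper
  have key := (icoRotate n).ncard_turning_le_of_injective hf
  simp only [hv.apply_icoRotate, hv.apply_icoRotate_inv, ne_eq, icoRotate_apply_ne hn,
    not_false_eq_true, true_and] at key
  rw [natCard_subtype_ico, natCard_subtype_ico_prod]
  exact key
end

section
/- Let T be a cyclic tour on distinct reals with contracted tour T̃. Then there is an injection from cf(T̃) to cf(T): for every conflicting pair of the contracted tour there is a corresponding conflicting pair of the original tour, and distinct contracted conflicting pairs map to distinct original conflicting pairs. In particular |cf(T̃)| ≤ |cf(T)|. -/
open Set Function

lemma Int.exists_le_lt_add_one_of_le_of_lt {α : Type*} [LinearOrder α] {w : ℤ → α} {c : α}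
    {p q : ℤ} (hpq : p ≤ q) (hp : w p ≤ c) (hq : c < w q) :
    ∃ x, p ≤ x ∧ x < q ∧ w x ≤ c ∧ c < w (x + 1) := by
  induction q, hpq using Int.leInduction with
  | base => exact absurd hq hp.not_gt
  | succ q hpq ih =>
    by_cases hc : c < w q
    · obtain ⟨x, hpx, hxq, hx⟩ := ih hc
      exact ⟨x, hpx, by omega, hx⟩
    · exact ⟨q, hpq, by omega, not_lt.mp hc, hq⟩

lemma Int.exists_ge_gt_add_one_of_ge_of_gt {α : Type*} [LinearOrder α] {w : ℤ → α} {c : α}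
    {p q : ℤ} (hpq : p ≤ q) (hp : c ≤ w p) (hq : w q < c) :
    ∃ x, p ≤ x ∧ x < q ∧ c ≤ w x ∧ w (x + 1) < c :=
  Int.exists_le_lt_add_one_of_le_of_lt (α := αᵒᵈ) hpq hp hq

lemma Int.eq_of_emod_eq_of_mem_Ico {n L a b : ℤ} (ha : a ∈ Ico L (L + n))
    (hb : b ∈ Ico L (L + n)) (h : a % n = b % n) : a = b := by
  have := Int.eq_zero_of_abs_lt_dvd (Int.ModEq.dvd h) (abs_sub_lt_iff.2 ⟨by grind, by grind⟩)
  omega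

section Turning

variable {v : ℤ → ℝ}

lemma le_add_one_of_not_turning {x : ℤ} (h : ¬turning v x) (hx : v (x - 1) ≤ v x) :
    v x ≤ v (x + 1) := by
  by_contra hlt
  exact h ⟨fun h' => hlt h'.2.le, fun h' => h'.2.not_ge hx⟩

lemma turning_neg {x : ℤ} : turning (-v) x ↔ turning v x := by
  simp only [turning, Pi.neg_apply, neg_lt_neg_iff]
  tauto

variable {p q : ℤ} (hnt : ∀ x, p < x → x < q → ¬turning v x)
include hnt

lemma monotoneOn_Icc_of_not_turning (h : v p ≤ v (p + 1)) : MonotoneOn v (Icc p q) := by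
  suffices hstep : ∀ x, p ≤ x → x < q → v x ≤ v (x + 1) from
    monotoneOn_of_le_add_one ordConnected_Icc fun x _ hx hx1 => hstep x hx.1 (by grind)
  intro x hx
  induction x, hx using Int.leInduction with
  | base => exact fun _ => h
  | succ x hpx ih =>
    intro hxq
    exact le_add_one_of_not_turning (hnt _ (by omega) hxq) (by simpa using ih (by omega))

lemma antitoneOn_Icc_of_not_turning (h : v (p + 1) ≤ v p) : AntitoneOn v (Icc p q) := by
  have := monotoneOn_Icc_of_not_turning (v := -v)
    (fun x hpx hxq => turning_neg.not.2 (hnt x hpx hxq)) (by simpa using h)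
  simpa using this.neg

lemma monotoneOn_or_antitoneOn_Icc_of_not_turning :
    MonotoneOn v (Icc p q) ∨ AntitoneOn v (Icc p q) :=
  (le_total (v p) (v (p + 1))).imp (monotoneOn_Icc_of_not_turning hnt)
    (antitoneOn_Icc_of_not_turning hnt)

end Turning

lemma conflicting_emod {v : ℤ → ℝ} {n : ℤ} (hv : Periodic v n) (a b : ℤ) :
    conflicting v (a % n) (b % n) ↔ conflicting v a b := by
  have hshift : ∀ x y, v (x % n + y) = v (x + y) := fun x y => by
    rw [← hv.sub_int_mul_eq (x := x + y) (x / n), Int.cast_id, Int.emod_def]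
    ring_nf
  have hmod : ∀ x, v (x % n) = v x := fun x => by simpa using hshift x 0
  simp only [conflicting, hshift, hmod]

lemma exists_conflicting_of_monotoneOn_of_antitoneOn {v : ℤ → ℝ} {p q r s : ℤ} (hpq : p ≤ q)
    (hrs : r ≤ s) (hup : MonotoneOn v (Icc p q)) (hdown : AntitoneOn v (Icc r s))
    (h₁ : v p ≤ v s) (h₂ : v s < v q) (h₃ : v q ≤ v r) :
    ∃ a ∈ Ico p q, ∃ b ∈ Ico r s, conflicting v a b := by
  obtain ⟨a, hpa, haq, hva, hva₁⟩ := Int.exists_le_lt_add_one_of_le_of_lt hpq h₁ h₂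
  have hva₁q : v (a + 1) ≤ v q := hup ⟨by omega, by omega⟩ ⟨hpq, le_rfl⟩ (by omega)
  obtain ⟨b, hrb, hbs, hvb, hvb₁⟩ :=
    Int.exists_ge_gt_add_one_of_ge_of_gt hrs (hva₁q.trans h₃) hva₁
  have hvsb₁ : v s ≤ v (b + 1) := hdown ⟨by omega, by omega⟩ ⟨hrs, le_rfl⟩ (by omega)
  exact ⟨a, ⟨hpa, haq⟩, b, ⟨hrb, hbs⟩, hva.trans hvsb₁, hvb₁, hvb⟩

lemma Int.add_mul_eq_of_add_eq {f : ℤ → ℤ} {p d : ℤ} (h : ∀ i, f (i + p) = f i + d)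
    (i k : ℤ) : f (i + p * k) = f i + d * k := by
  induction k using Int.induction_on with
  | zero => simp
  | succ k ih => rw [mul_add_one, ← add_assoc, h, ih]; ring
  | pred k ih =>
    have := h (i + p * (-k - 1))
    rw [show i + p * (-k - 1) + p = i + p * -k by ring, ih] at this
    linear_combination -this

section Contraction

variable {n : ℤ} {m : ℕ} {v : ℤ → ℝ} {cIdx : ℤ → ℤ} (hmono : StrictMono cIdx)
  (hcper : ∀ i, cIdx (i + 2 * (m : ℤ)) = cIdx i + n)
  (hall : ∀ j : ℤ, turning v j → ∃ i : ℤ, (j - cIdx i) % n = 0)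

include hcper hall in
lemma exists_eq_of_turning {x : ℤ} (hx : turning v x) : ∃ k, x = cIdx k := by
  obtain ⟨i, hi⟩ := hall x hx
  obtain ⟨k, hk⟩ := Int.dvd_of_emod_eq_zero hi
  exact ⟨i + 2 * m * k, by rw [Int.add_mul_eq_of_add_eq hcper]; linarith⟩

include hmono hcper hall in
lemma exists_lift_conflicting {i j : ℤ} (hc : conflicting (fun k => v (cIdx k)) i j) :
    ∃ a ∈ Ico (cIdx i) (cIdx (i + 1)), ∃ b ∈ Ico (cIdx j) (cIdx (j + 1)), conflicting v a b := by
  simp only [conflicting] at hc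
  obtain ⟨h₁, h₂, h₃⟩ := hc
  have hle : ∀ k, cIdx k ≤ cIdx (k + 1) := fun k => hmono.monotone (by omega)
  have hrun : ∀ k, MonotoneOn v (Icc (cIdx k) (cIdx (k + 1))) ∨
      AntitoneOn v (Icc (cIdx k) (cIdx (k + 1))) := fun k =>
    monotoneOn_or_antitoneOn_Icc_of_not_turning fun x hkx hxk hx => by
      obtain ⟨l, rfl⟩ := exists_eq_of_turning hcper hall hx
      have := hmono.lt_iff_lt.1 hkx
      have := hmono.lt_iff_lt.1 hxk
      omega
  refine exists_conflicting_of_monotoneOn_of_antitoneOn (hle i) (hle j) ?_ ?_ h₁ h₂ h₃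
  · refine (hrun i).resolve_right fun hdown => ?_
    have := hdown (left_mem_Icc.2 (hle i)) (right_mem_Icc.2 (hle i)) (hle i)
    linarith
  · refine (hrun j).resolve_left fun hup => ?_
    have := hup (left_mem_Icc.2 (hle j)) (right_mem_Icc.2 (hle j)) (hle j)
    linarith

include hmono in
lemma index_eq_of_emod_eq (hend : cIdx (2 * (m : ℤ)) = cIdx 0 + n) {i i' a a' : ℤ}
    (hi : i ∈ Ico 0 (2 * (m : ℤ))) (hi' : i' ∈ Ico 0 (2 * (m : ℤ)))
    (ha : a ∈ Ico (cIdx i) (cIdx (i + 1))) (ha' : a' ∈ Ico (cIdx i') (cIdx (i' + 1)))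
    (h : a % n = a' % n) : i = i' := by
  have hwindow : ∀ k ∈ Ico 0 (2 * (m : ℤ)),
      Ico (cIdx k) (cIdx (k + 1)) ⊆ Ico (cIdx 0) (cIdx 0 + n) := fun k hk =>
    Ico_subset_Ico (hmono.monotone hk.1) (hend ▸ hmono.monotone (by grind))
  have haa' : a = a' := Int.eq_of_emod_eq_of_mem_Ico (hwindow i hi ha) (hwindow i' hi' ha') h
  subst haa'
  by_contra hne
  exact disjoint_left.1 (hmono.monotone.pairwise_disjoint_on_Ico_succ hne)
    (by simpa using ha) (by simpa using ha')

end Contraction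

instance {n : ℤ} {P : ℤ × ℤ → Prop} :
    Finite {p : ℤ × ℤ // 0 ≤ p.1 ∧ p.1 < n ∧ 0 ≤ p.2 ∧ p.2 < n ∧ P p} :=
  Set.Finite.to_subtype <| ((finite_Ico 0 n).prod (finite_Ico 0 n)).subset
    fun _ hp => ⟨⟨hp.1, hp.2.1⟩, hp.2.2.1, hp.2.2.2.1⟩

theorem stmt_10_general (n : ℤ) (hn : 2 ≤ n) (m : ℕ)
    (v : ℤ → ℝ) (hper : ∀ i, v (i + n) = v i)
    (cIdx : ℤ → ℤ) (hmono : StrictMono cIdx)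
    (hcper : ∀ i, cIdx (i + 2 * (m : ℤ)) = cIdx i + n)
    (hall : ∀ j : ℤ, turning v j → ∃ i : ℤ, (j - cIdx i) % n = 0) :
    (∃ f : {p : ℤ × ℤ // 0 ≤ p.1 ∧ p.1 < 2 * (m : ℤ) ∧ 0 ≤ p.2 ∧
              p.2 < 2 * (m : ℤ) ∧ conflicting (fun i => v (cIdx i)) p.1 p.2} →
          {p : ℤ × ℤ // 0 ≤ p.1 ∧ p.1 < n ∧ 0 ≤ p.2 ∧ p.2 < n ∧
              conflicting v p.1 p.2},
        Function.Injective f) ∧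
      Nat.card {p : ℤ × ℤ // 0 ≤ p.1 ∧ p.1 < 2 * (m : ℤ) ∧ 0 ≤ p.2 ∧
          p.2 < 2 * (m : ℤ) ∧ conflicting (fun i => v (cIdx i)) p.1 p.2} ≤
        Nat.card {p : ℤ × ℤ // 0 ≤ p.1 ∧ p.1 < n ∧ 0 ≤ p.2 ∧ p.2 < n ∧
            conflicting v p.1 p.2} := by
  have hn₀ : 0 < n := by omega
  have hend : cIdx (2 * (m : ℤ)) = cIdx 0 + n := by simpa using hcper 0
  choose! A hA B hB hAB using fun i j (hc : conflicting (fun k => v (cIdx k)) i j) =>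
    exists_lift_conflicting hmono hcper hall hc
  refine (and_iff_left_of_imp fun ⟨f, hf⟩ => Nat.card_le_card_of_injective f hf).2
    ⟨fun x => ⟨(A x.1.1 x.1.2 % n, B x.1.1 x.1.2 % n), Int.emod_nonneg _ hn₀.ne',
      Int.emod_lt_of_pos _ hn₀, Int.emod_nonneg _ hn₀.ne', Int.emod_lt_of_pos _ hn₀,
      (conflicting_emod hper _ _).2 (hAB _ _ x.2.2.2.2.2)⟩, ?_⟩
  rintro ⟨⟨i, j⟩, hi₀, hi, hj₀, hj, hc⟩ ⟨⟨i', j'⟩, hi₀', hi', hj₀', hj', hc'⟩ h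
  simp only [Subtype.mk.injEq, Prod.mk.injEq] at h
  obtain rfl := index_eq_of_emod_eq hmono hend ⟨hi₀, hi⟩ ⟨hi₀', hi'⟩ (hA _ _ hc) (hA _ _ hc')
    h.1
  obtain rfl := index_eq_of_emod_eq hmono hend ⟨hj₀, hj⟩ ⟨hj₀', hj'⟩ (hB _ _ hc) (hB _ _ hc')
    h.2
  rfl

/-- Let `T` be a cyclic tour on `n ≥ 2` distinct reals (an `n`-periodic
`v : ℤ → ℝ`) with exactly `2m` turning points, enumerated in cyclic order by a
strictly monotone `cIdx : ℤ → ℤ` with `cIdx (i + 2m) = cIdx i + n`; the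
contracted tour `T̃` is `t = v ∘ cIdx`.  Then there is an injection from the
conflicting pairs of `T̃` to those of `T`; in particular `|cf(T̃)| ≤ |cf(T)|`. -/
theorem stmt_10 (n : ℤ) (hn : 2 ≤ n) (m : ℕ) (hm : 1 ≤ m)
    (v : ℤ → ℝ) (hper : ∀ i, v (i + n) = v i)
    (hinj : ∀ i j, 0 ≤ i → i < n → 0 ≤ j → j < n → v i = v j → i = j)
    (cIdx : ℤ → ℤ) (hmono : StrictMono cIdx)
    (hcper : ∀ i, cIdx (i + 2 * (m : ℤ)) = cIdx i + n)
    (hcturn : ∀ i, turning v (cIdx i))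
    (hall : ∀ j : ℤ, turning v j → ∃ i : ℤ, (j - cIdx i) % n = 0) :
    (∃ f : {p : ℤ × ℤ // 0 ≤ p.1 ∧ p.1 < 2 * (m : ℤ) ∧ 0 ≤ p.2 ∧
              p.2 < 2 * (m : ℤ) ∧ conflicting (fun i => v (cIdx i)) p.1 p.2} →
          {p : ℤ × ℤ // 0 ≤ p.1 ∧ p.1 < n ∧ 0 ≤ p.2 ∧ p.2 < n ∧
              conflicting v p.1 p.2},
        Function.Injective f) ∧
      Nat.card {p : ℤ × ℤ // 0 ≤ p.1 ∧ p.1 < 2 * (m : ℤ) ∧ 0 ≤ p.2 ∧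
          p.2 < 2 * (m : ℤ) ∧ conflicting (fun i => v (cIdx i)) p.1 p.2} ≤
        Nat.card {p : ℤ × ℤ // 0 ≤ p.1 ∧ p.1 < n ∧ 0 ≤ p.2 ∧ p.2 < n ∧
            conflicting v p.1 p.2} :=
  stmt_10_general n hn m v hper cIdx hmono hcper hall
end
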